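/- Let K be an abstract simplicial complex on [m], let i ∈ ω ⊆ [m] with {i} ∈ K. Then the full subcomplex of K(v_i) on the vertex set χ_i(ω) equals {ε ∪ χ_i(τ) : ε ⊆ {i}, τ ∈ K_{ω∖{i}}}, which is a cone with apex i; consequently its reduced simplicial homology vanishes in all degrees. -/

import Mathlib

set_option synthInstance.maxHeartbeats 1000000
set_option maxHeartbeats 1000000

structure ASC (m : ℕ) where
  faces : Set (Finset (Fin m))
  empty_mem : ∅ ∈ faces
  down_closed : ∀ {σ τ : Finset (Fin m)}, σ ∈ faces → τ ⊆ σ → τ ∈ faces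

def csg {m : ℕ} (i : Fin m) (σ : Finset (Fin m)) : ℤ :=
  (-1) ^ (σ.filter (fun j => j < i)).card

variable {m : ℕ}

/-- the relabeling `χ_i : [m] → [m+1]`. -/
def chi (i : Fin m) (j : Fin m) : Fin (m + 1) :=
  if (j : ℕ) ≤ (i : ℕ) then j.castSucc else j.succ

def chiF (i : Fin m) (σ : Finset (Fin m)) : Finset (Fin (m + 1)) := σ.image (chi i)

/-- the faces of the simplicial wedge `K(v_i)`. -/
def wedgeFaces (K : ASC m) (i : Fin m) : Set (Finset (Fin (m + 1))) :=
  {s | ∃ (α : Finset (Fin (m + 1))) (t : Finset (Fin m)), s = α ∪ chiF i t ∧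
      ((α ⊆ {i.castSucc} ∧ t ∈ K.faces ∧ i ∉ t) ∨
       (α ⊆ {i.succ} ∧ t ∈ K.faces ∧ i ∉ t) ∨
       (α ⊆ {i.castSucc, i.succ} ∧ t ∈ K.faces ∧ i ∉ t ∧ insert i t ∈ K.faces))}

/-- full subcomplex of a collection of faces on the vertex set `w`. -/
def fullSub {n : ℕ} (F : Set (Finset (Fin n))) (w : Finset (Fin n)) :
    Set (Finset (Fin n)) := {s | s ∈ F ∧ s ⊆ w}

/-- basis of the augmented simplicial chain complex of a collection of faces -/
def RIdx {n : ℕ} (F : Set (Finset (Fin n))) : Type := {σ : Finset (Fin n) // σ ∈ F}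

open Classical in
/-- the boundary of the augmented simplicial chain complex -/
noncomputable def Rbnd {n : ℕ} (F : Set (Finset (Fin n))) :
    (RIdx F →₀ ℤ) →ₗ[ℤ] (RIdx F →₀ ℤ) :=
  Finsupp.lift (RIdx F →₀ ℤ) ℤ (RIdx F) fun b =>
    ∑ i ∈ b.1,
      if h : b.1.erase i ∈ F then
        csg i b.1 • Finsupp.single (⟨b.1.erase i, h⟩ : RIdx F) (1 : ℤ)
      else 0

/-- degree of a simplex in the augmented chain complex is `card σ - 1`. -/
def Rdeg {n : ℕ} {F : Set (Finset (Fin n))} (b : RIdx F) : ℤ := (b.1.card : ℤ) - 1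

open Classical in
noncomputable def partSub {ι α : Type*} (f : ι → α) (a : α) : Submodule ℤ (ι →₀ ℤ) where
  carrier := {x | ∀ b ∈ x.support, f b = a}
  add_mem' := by
    intro x y hx hy b hb
    rcases Finset.mem_union.1 (Finsupp.support_add hb) with h | h
    · exact hx b h
    · exact hy b h
  zero_mem' := by intro b hb; simp at hb
  smul_mem' := by
    intro c x hx b hb
    exact hx b (Finsupp.support_smul hb)

noncomputable def cyclesAt {ι : Type*} (d : (ι →₀ ℤ) →ₗ[ℤ] (ι →₀ ℤ)) (deg : ι → ℤ)
    (p : ℤ) : Submodule ℤ (ι →₀ ℤ) :=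
  LinearMap.ker d ⊓ partSub deg p

noncomputable abbrev homAt {ι : Type*} (d : (ι →₀ ℤ) →ₗ[ℤ] (ι →₀ ℤ)) (deg : ι → ℤ)
    (p : ℤ) : Type _ :=
  (cyclesAt d deg p) ⧸
    (Submodule.comap (cyclesAt d deg p).subtype (Submodule.map d (partSub deg (p + 1))))

/-!
Every face of `K(v_i)` inside `χ_i(ω)` avoids the vertex `i+1`, which is not in the image of
`χ_i`, so it lies in the part `{i} * χ_i(K_{[m]∖{i}})` of the wedge; as `i ∈ ω`, adding the vertex
`i` keeps a face inside `χ_i(ω)`, so the full subcomplex is a cone with apex `i`. On the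
augmented chains of a cone with apex `a`, joining with `a` (with the sign `(-1)^#{j ∈ σ | j < a}`)
is a contraction `h` with `∂h + h∂ = id`, so every cycle `z` is the boundary of `h z`.
-/

lemma Finsupp.lift_single_one {R ι M : Type*} [Semiring R] [AddCommMonoid M] [Module R M]
    (f : ι → M) (b : ι) : Finsupp.lift M R ι f (Finsupp.single b 1) = f b := by
  rw [Finsupp.lift_apply, Finsupp.sum_single_index (zero_smul R (f b)), one_smul]

section Sign

variable {n : ℕ}

lemma csg_mul_self (j : Fin n) (σ : Finset (Fin n)) : csg j σ * csg j σ = 1 := by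
  rw [csg, ← pow_add]
  exact Even.neg_one_pow ⟨_, rfl⟩

lemma csg_insert_of_not_lt {a j : Fin n} (σ : Finset (Fin n)) (h : ¬ a < j) :
    csg j (insert a σ) = csg j σ := by
  rw [csg, Finset.filter_insert, if_neg h, csg]

lemma csg_insert_of_lt {a j : Fin n} {σ : Finset (Fin n)} (ha : a ∉ σ) (h : a < j) :
    csg j (insert a σ) = -csg j σ := by
  rw [csg, Finset.filter_insert, if_pos h,
    Finset.card_insert_of_notMem (fun hc => ha (Finset.mem_filter.1 hc).1), pow_succ, csg]
  ring

lemma csg_erase_self (a : Fin n) (σ : Finset (Fin n)) : csg a (σ.erase a) = csg a σ := by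
  rw [csg, Finset.filter_erase, Finset.erase_eq_of_notMem (by simp), csg]

/-- The two ways of passing from `σ` to `insert a (σ.erase j)` carry opposite signs. -/
lemma csg_mul_csg_insert_add_csg_mul_csg_erase {a j : Fin n} {σ : Finset (Fin n)}
    (ha : a ∉ σ) (hj : j ∈ σ) :
    csg a σ * csg j (insert a σ) + csg j σ * csg a (σ.erase j) = 0 := by
  have hja : j ≠ a := fun h => ha (h ▸ hj)
  have hσ : insert j (σ.erase j) = σ := Finset.insert_erase hj
  rcases lt_or_gt_of_ne hja with hlt | hlt
  · have he : csg a σ = -csg a (σ.erase j) := by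
      rw [← csg_insert_of_lt (Finset.notMem_erase j σ) hlt, hσ]
    rw [csg_insert_of_not_lt _ (lt_asymm hlt), he]
    ring
  · have he : csg a (σ.erase j) = csg a σ := by
      rw [← csg_insert_of_not_lt _ (lt_asymm hlt), hσ]
    rw [csg_insert_of_lt ha hlt, he]
    ring

end Sign

namespace RIdx

variable {n : ℕ} {F : Set (Finset (Fin n))}

/- `RIdx` is not reducible, so terms built with `Subtype.val` and `Subtype.mk` on it are
ill-typed at reducible transparency and defeat `rw`; these wrappers avoid that. -/
def face (b : RIdx F) : Finset (Fin n) := b.1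

def ofMem {s : Finset (Fin n)} (hs : s ∈ F) : RIdx F := ⟨s, hs⟩

lemma face_mem (b : RIdx F) : b.face ∈ F := b.2

lemma ofMem_face (b : RIdx F) : ofMem b.face_mem = b := rfl

lemma _root_.Rdeg_ofMem {s : Finset (Fin n)} (hs : s ∈ F) :
    Rdeg (ofMem hs) = (s.card : ℤ) - 1 := rfl

lemma ofMem_congr {s t : Finset (Fin n)} (hs : s ∈ F) (ht : t ∈ F) (h : s = t) :
    ofMem hs = ofMem ht := by
  subst h; rfl

end RIdx

section Cone

variable {n : ℕ} {F : Set (Finset (Fin n))} {a : Fin n}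

open RIdx

def IsConeWithApex (F : Set (Finset (Fin n))) (a : Fin n) : Prop :=
  ∀ ⦃s⦄, s ∈ F → insert a s ∈ F

/-- Join with the apex, signed so that `∂h + h∂ = id`. -/
noncomputable def coneContraction (hF : IsConeWithApex F a) :
    (RIdx F →₀ ℤ) →ₗ[ℤ] (RIdx F →₀ ℤ) :=
  Finsupp.lift (RIdx F →₀ ℤ) ℤ (RIdx F) fun b =>
    if a ∈ b.face then 0 else csg a b.face • Finsupp.single (ofMem (hF b.face_mem)) 1

lemma Rbnd_single_ofMem (hF : IsLowerSet F) {s : Finset (Fin n)} (hs : s ∈ F) :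
    Rbnd F (Finsupp.single (ofMem hs) 1) =
      ∑ j ∈ s, csg j s • Finsupp.single (ofMem (hF (Finset.erase_subset j s) hs)) 1 := by
  rw [Rbnd, Finsupp.lift_single_one]
  exact Finset.sum_congr rfl fun j _ => dif_pos _

lemma coneContraction_single_of_mem (hF : IsConeWithApex F a) {s : Finset (Fin n)}
    (hs : s ∈ F) (ha : a ∈ s) : coneContraction hF (Finsupp.single (ofMem hs) 1) = 0 := by
  rw [coneContraction, Finsupp.lift_single_one]
  exact if_pos ha

lemma coneContraction_single_of_notMem (hF : IsConeWithApex F a) {s : Finset (Fin n)}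
    (hs : s ∈ F) (ha : a ∉ s) :
    coneContraction hF (Finsupp.single (ofMem hs) 1) =
      csg a s • Finsupp.single (ofMem (hF hs)) 1 := by
  rw [coneContraction, Finsupp.lift_single_one]
  exact if_neg ha

lemma Rbnd_coneContraction_add_single (hlow : IsLowerSet F) (hF : IsConeWithApex F a)
    {s : Finset (Fin n)} (hs : s ∈ F) :
    Rbnd F (coneContraction hF (Finsupp.single (ofMem hs) 1)) +
      coneContraction hF (Rbnd F (Finsupp.single (ofMem hs) 1)) =
        Finsupp.single (ofMem hs) 1 := by
  -- If `a ∈ s` only the term `j = a` of `h ∂ s` survives. Otherwise the term `j = a` of `∂ h s`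
  -- gives back `s`, and its other terms cancel those of `h ∂ s`.
  rw [Rbnd_single_ofMem hlow, map_sum]
  simp only [map_zsmul]
  by_cases ha : a ∈ s
  · rw [coneContraction_single_of_mem hF hs ha, map_zero, zero_add,
      Finset.sum_eq_single_of_mem a ha fun j _ hja => by
        rw [coneContraction_single_of_mem hF _ (Finset.mem_erase.2 ⟨Ne.symm hja, ha⟩),
          smul_zero],
      coneContraction_single_of_notMem hF _ (Finset.notMem_erase a s), smul_smul,
      csg_erase_self, csg_mul_self, one_smul, ofMem_congr _ _ (Finset.insert_erase ha)]
  · rw [coneContraction_single_of_notMem hF hs ha, map_zsmul, Rbnd_single_ofMem hlow,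
      Finset.sum_insert ha, smul_add, smul_smul, csg_insert_of_not_lt _ (lt_irrefl a),
      csg_mul_self, one_smul, ofMem_congr _ hs (Finset.erase_insert ha), add_assoc,
      add_eq_left, Finset.smul_sum, ← Finset.sum_add_distrib]
    refine Finset.sum_eq_zero fun j hj => ?_
    have hjs : insert a (s.erase j) ∈ F := hF (hlow (Finset.erase_subset j s) hs)
    rw [coneContraction_single_of_notMem hF _ (fun h => ha (Finset.mem_of_mem_erase h)),
      smul_smul, smul_smul,
      ofMem_congr _ hjs (Finset.erase_insert_of_ne (fun h => ha (h ▸ hj))), ← add_smul,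
      csg_mul_csg_insert_add_csg_mul_csg_erase ha hj, zero_smul]

lemma Rbnd_comp_coneContraction_add (hlow : IsLowerSet F) (hF : IsConeWithApex F a) :
    (Rbnd F).comp (coneContraction hF) + (coneContraction hF).comp (Rbnd F) =
      LinearMap.id := by
  ext b : 2
  exact Rbnd_coneContraction_add_single hlow hF b.face_mem

lemma single_mem_partSub {ι α : Type*} {f : ι → α} {b : ι} {c : α} (h : f b = c) (r : ℤ) :
    Finsupp.single b r ∈ partSub f c := fun b' hb' => by
  rwa [Finset.mem_singleton.1 (Finsupp.support_single_subset hb')]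

lemma coneContraction_mem_partSub (hF : IsConeWithApex F a) {x : RIdx F →₀ ℤ} {p : ℤ}
    (hx : x ∈ partSub Rdeg p) : coneContraction hF x ∈ partSub Rdeg (p + 1) := by
  rw [← Finsupp.sum_single x, map_finsuppSum]
  refine Submodule.finsuppSum_mem _ _ _ _ fun b hb => ?_
  rw [← mul_one (x b), ← smul_eq_mul, ← Finsupp.smul_single, map_zsmul, ← ofMem_face b]
  refine Submodule.smul_mem _ _ ?_
  by_cases ha : a ∈ b.face
  · rw [coneContraction_single_of_mem hF _ ha]
    exact Submodule.zero_mem _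
  · rw [coneContraction_single_of_notMem hF _ ha]
    refine Submodule.smul_mem _ _ (single_mem_partSub ?_ 1)
    have hdeg : Rdeg (ofMem b.face_mem) = p := hx b (Finsupp.mem_support_iff.2 hb)
    rw [Rdeg_ofMem] at hdeg ⊢
    rw [Finset.card_insert_of_notMem ha]
    push_cast
    omega

end Cone

theorem homAt_subsingleton_of_isConeWithApex {n : ℕ} {F : Set (Finset (Fin n))} {a : Fin n}
    (hlow : IsLowerSet F) (hF : IsConeWithApex F a) (p : ℤ) :
    Subsingleton (homAt (Rbnd F) Rdeg p) := by
  rw [Submodule.Quotient.subsingleton_iff, eq_top_iff]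
  rintro ⟨x, hker, hx⟩ -
  refine ⟨coneContraction hF x, coneContraction_mem_partSub hF hx, ?_⟩
  have := LinearMap.congr_fun (Rbnd_comp_coneContraction_add hlow hF) x
  simpa [LinearMap.mem_ker.1 hker] using this

lemma Finset.eq_inter_union_image_filter {α β : Type*} [DecidableEq β] {f : α → β}
    {t ε : Finset β} {τ : Finset α} (h : t ⊆ ε ∪ τ.image f) :
    t = t ∩ ε ∪ (τ.filter (f · ∈ t)).image f := by
  ext x
  have := @h x
  simp only [Finset.mem_union, Finset.mem_inter, Finset.mem_image, Finset.mem_filter] at this ⊢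
  constructor
  · intro hx
    rcases this hx with hε | ⟨y, hy, rfl⟩
    exacts [Or.inl ⟨hx, hε⟩, Or.inr ⟨y, ⟨hy, hx⟩, rfl⟩]
  · rintro (⟨hx, -⟩ | ⟨y, ⟨-, hy⟩, rfl⟩)
    exacts [hx, hy]

lemma chi_injective (i : Fin m) : Function.Injective (chi i) := by
  intro j k h
  have hv := congrArg Fin.val h
  unfold chi at hv
  split_ifs at hv <;> simp only [Fin.val_castSucc, Fin.val_succ] at hv <;> exact Fin.ext (by omega)

lemma chi_self (i : Fin m) : chi i i = i.castSucc := by simp [chi]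

lemma succ_notMem_chiF (i : Fin m) (σ : Finset (Fin m)) : i.succ ∉ chiF i σ := by
  simp only [chiF, Finset.mem_image, not_exists, not_and]
  intro j _ hj
  have hv := congrArg Fin.val hj
  unfold chi at hv
  split_ifs at hv <;> simp only [Fin.val_castSucc, Fin.val_succ] at hv <;> omega

lemma chiF_subset_chiF_iff {i : Fin m} {σ τ : Finset (Fin m)} :
    chiF i σ ⊆ chiF i τ ↔ σ ⊆ τ :=
  Finset.image_subset_image_iff (chi_injective i)

lemma exists_of_mem_wedgeFaces {K : ASC m} {i : Fin m} {s : Finset (Fin (m + 1))}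
    (hs : s ∈ wedgeFaces K i) :
    ∃ (α : Finset (Fin (m + 1))) (t : Finset (Fin m)),
      s = α ∪ chiF i t ∧ α ⊆ {i.castSucc, i.succ} ∧ t ∈ K.faces ∧ i ∉ t := by
  obtain ⟨α, t, rfl, ⟨hα, ht, hit⟩ | ⟨hα, ht, hit⟩ | ⟨hα, ht, hit, -⟩⟩ := hs
  · exact ⟨α, t, rfl, hα.trans (by simp), ht, hit⟩
  · exact ⟨α, t, rfl, hα.trans (by simp), ht, hit⟩
  · exact ⟨α, t, rfl, hα, ht, hit⟩

def coneOnRestriction (K : ASC m) (i : Fin m) (ω : Finset (Fin m)) :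
    Set (Finset (Fin (m + 1))) :=
  {s | ∃ (ε : Finset (Fin (m + 1))) (τ : Finset (Fin m)),
    ε ⊆ {i.castSucc} ∧ τ ∈ K.faces ∧ τ ⊆ ω.erase i ∧ s = ε ∪ chiF i τ}

lemma fullSub_wedgeFaces_chiF (K : ASC m) {i : Fin m} {ω : Finset (Fin m)} (hiω : i ∈ ω) :
    fullSub (wedgeFaces K i) (chiF i ω) = coneOnRestriction K i ω := by
  ext s
  constructor
  · rintro ⟨hs, hsω⟩
    obtain ⟨α, t, rfl, hα, ht, hit⟩ := exists_of_mem_wedgeFaces hs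
    rw [Finset.union_subset_iff] at hsω
    have hα' : α ⊆ {i.castSucc} := fun x hx => by
      rcases Finset.mem_insert.1 (hα hx) with rfl | hx'
      · exact Finset.mem_singleton_self _
      · rw [Finset.mem_singleton.1 hx'] at hx
        exact absurd (hsω.1 hx) (succ_notMem_chiF i ω)
    exact ⟨α, t, hα', ht, fun j hj => Finset.mem_erase.2
      ⟨fun h => hit (h ▸ hj), chiF_subset_chiF_iff.1 hsω.2 hj⟩, rfl⟩
  · rintro ⟨ε, τ, hε, hτ, hτω, rfl⟩
    have hiτ : i ∉ τ := fun h => (Finset.mem_erase.1 (hτω h)).1 rfl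
    refine ⟨⟨ε, τ, rfl, Or.inl ⟨hε, hτ, hiτ⟩⟩, Finset.union_subset ?_ ?_⟩
    · exact hε.trans (Finset.singleton_subset_iff.2 (chi_self i ▸ Finset.mem_image_of_mem _ hiω))
    · exact chiF_subset_chiF_iff.2 (hτω.trans (Finset.erase_subset i ω))

lemma isLowerSet_coneOnRestriction (K : ASC m) (i : Fin m) (ω : Finset (Fin m)) :
    IsLowerSet (coneOnRestriction K i ω) := by
  rintro s t hts ⟨ε, τ, hε, hτ, hτω, rfl⟩
  exact ⟨_, _, Finset.inter_subset_right.trans hε,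
    K.down_closed hτ (Finset.filter_subset _ τ), (Finset.filter_subset _ τ).trans hτω,
    Finset.eq_inter_union_image_filter hts⟩

lemma isConeWithApex_coneOnRestriction (K : ASC m) (i : Fin m) (ω : Finset (Fin m)) :
    IsConeWithApex (coneOnRestriction K i ω) i.castSucc := by
  rintro s ⟨ε, τ, hε, hτ, hτω, rfl⟩
  exact ⟨insert i.castSucc ε, τ, Finset.insert_subset (Finset.mem_singleton_self _) hε,
    hτ, hτω, (Finset.insert_union _ _ _).symm⟩

theorem stmt11_general (K : ASC m) (i : Fin m) (ω : Finset (Fin m)) (hiω : i ∈ ω) :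
    (fullSub (wedgeFaces K i) (chiF i ω) =
      {s | ∃ (ε : Finset (Fin (m + 1))) (τ : Finset (Fin m)),
        ε ⊆ {i.castSucc} ∧ τ ∈ K.faces ∧ τ ⊆ ω.erase i ∧ s = ε ∪ chiF i τ}) ∧
    (∀ p : ℤ, Subsingleton
      (homAt (Rbnd (fullSub (wedgeFaces K i) (chiF i ω))) Rdeg p)) := by
  rw [fullSub_wedgeFaces_chiF K hiω]
  exact ⟨rfl, homAt_subsingleton_of_isConeWithApex (isLowerSet_coneOnRestriction K i ω)
    (isConeWithApex_coneOnRestriction K i ω)⟩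

theorem stmt11 (K : ASC m) (i : Fin m) (ω : Finset (Fin m)) (hiω : i ∈ ω)
    (hiK : {i} ∈ K.faces) :
    (fullSub (wedgeFaces K i) (chiF i ω) =
      {s | ∃ (ε : Finset (Fin (m + 1))) (τ : Finset (Fin m)),
        ε ⊆ {i.castSucc} ∧ τ ∈ K.faces ∧ τ ⊆ ω.erase i ∧ s = ε ∪ chiF i τ}) ∧
    (∀ p : ℤ, Subsingleton
      (homAt (Rbnd (fullSub (wedgeFaces K i) (chiF i ω))) Rdeg p)) :=
  stmt11_general K i ω hiω
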